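/- Let n ≥ 1 and s ≥ 0 be natural numbers, let V be a unitary on (ℂ²)^{⊗n}, and let W be a unitary on (ℂ²)^{⊗(n+s)}, where the first s tensor factors are the postselection qubits and the last n factors carry the computation. Suppose the postselection relation (|1^s⟩⟨1^s| ⊗ I^{⊗n}) W |0^{n+s}⟩ = 2^{−s/2} · |1^s⟩ ⊗ (V |0^n⟩) holds. Then p_W^{IQP,s+1}(1) = 2^{−s} · p_V(1), i.e. ‖(|1^{s+1}⟩⟨1^{s+1}| ⊗ I^{⊗(n−1)}) W |0^{n+s}⟩‖² = 2^{−s} · ‖(|1⟩⟨1| ⊗ I^{⊗(n−1)}) V |0^n⟩‖². (This is the computational core of Theorem 2, NQP = NQP_IQP.) -/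
import Mathlib


open Matrix

/-- The all-zeros basis state `|0^n⟩` of `n` qubits. -/
noncomputable def ket0s (n : ℕ) : (Fin n → Fin 2) → ℂ :=
  fun z => if z = fun _ => 0 then 1 else 0

/-- The all-zeros basis state `|0^{n+s}⟩` of `s + n` qubits, with the `s`
postselection qubits as the first tensor factor. -/
noncomputable def ket0s' (s n : ℕ) : ((Fin s → Fin 2) × (Fin n → Fin 2)) → ℂ :=
  fun z => if z = ((fun _ => 0), (fun _ => 0)) then 1 else 0

/-- If the postselection relation
`(|1^s⟩⟨1^s| ⊗ I^{⊗n}) W |0^{n+s}⟩ = 2^{−s/2} · |1^s⟩ ⊗ (V |0^n⟩)` holds, then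
`p_W^{IQP,s+1}(1) = 2^{−s} · p_V(1)`, i.e.
`‖(|1^{s+1}⟩⟨1^{s+1}| ⊗ I^{⊗(n−1)}) W |0^{n+s}⟩‖² = 2^{−s} · ‖(|1⟩⟨1| ⊗ I^{⊗(n−1)}) V |0^n⟩‖²`.
This is the computational core of `NQP = NQP_IQP`. -/
theorem iqp_postselection_prob_eq
    (n s : ℕ) (hn : 1 ≤ n)
    (V : Matrix (Fin n → Fin 2) (Fin n → Fin 2) ℂ)
    (W : Matrix ((Fin s → Fin 2) × (Fin n → Fin 2))
                ((Fin s → Fin 2) × (Fin n → Fin 2)) ℂ)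
    (hV : V ∈ Matrix.unitaryGroup (Fin n → Fin 2) ℂ)
    (hW : W ∈ Matrix.unitaryGroup ((Fin s → Fin 2) × (Fin n → Fin 2)) ℂ)
    -- postselection relation:
    -- (|1^s⟩⟨1^s| ⊗ I^{⊗n}) W |0^{n+s}⟩ = 2^{−s/2} · |1^s⟩ ⊗ (V |0^n⟩)
    (hpost : ∀ (u : Fin s → Fin 2) (v : Fin n → Fin 2),
      (if u = fun _ => 1 then W.mulVec (ket0s' s n) (u, v) else 0) =
      (((((Real.sqrt 2) ^ s)⁻¹ : ℝ)) : ℂ) * (if u = fun _ => 1 then 1 else 0) *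
        V.mulVec (ket0s n) v) :
    -- p_W^{IQP,s+1}(1) = 2^{−s} · p_V(1)
    (∑ z : (Fin s → Fin 2) × (Fin n → Fin 2),
      Complex.normSq
        (if z.1 = (fun _ => 1) ∧ z.2 ⟨0, hn⟩ = 1
          then W.mulVec (ket0s' s n) z else 0)) =
    ((2 : ℝ) ^ s)⁻¹ *
      (∑ v : Fin n → Fin 2,
        Complex.normSq (if v ⟨0, hn⟩ = 1 then V.mulVec (ket0s n) v else 0)) := by
  rw [Fintype.sum_prod_type, Finset.mul_sum]
  rw [Fintype.sum_eq_single (fun _ => (1 : Fin 2))]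
  · apply Finset.sum_congr rfl
    intro v _
    have h := hpost (fun _ => 1) v
    simp only [if_pos rfl, mul_one] at h
    have hc : Complex.normSq ((((Real.sqrt 2) ^ s)⁻¹ : ℝ) : ℂ) = ((2:ℝ)^s)⁻¹ := by
      rw [Complex.normSq_ofReal, ← mul_inv, ← mul_pow,
        Real.mul_self_sqrt (by norm_num)]
    by_cases hv : v ⟨0, hn⟩ = 1
    · simp only [hv, and_true, if_pos rfl, if_true] at h ⊢
      rw [h, Complex.normSq_mul, Complex.normSq_mul, hc, Complex.normSq_one, mul_one]
    · simp [hv]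
  · intro u hu
    have : ∀ v : Fin n → Fin 2,
        Complex.normSq (if u = (fun _ => 1) ∧ v ⟨0, hn⟩ = 1
          then W.mulVec (ket0s' s n) (u, v) else 0) = 0 := by
      intro v; simp [hu]
    simp only [this, Finset.sum_const_zero]
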